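/- arXiv:quant-ph/0212096 — 4 statements merged into one kernel-verified Lean document; each statement's English description precedes it below -/
import Mathlib

section
/- For all positive integers ℓ, m, n and any commutative semiring K, the stride permutation matrices of order ℓmn satisfy the factorization P_{mn}^{ℓmn} = P_m^{ℓmn} · P_n^{ℓmn}. -/
open Matrix

/-- The `mn`-point stride-`n` permutation, as a permutation of `Fin N` (where `N = m * n`):
it sends the index of `e_i^m ⊗ e_j^n` (i.e. `n*i + j`, zero-based) to the index of
`e_j^n ⊗ e_i^m` (i.e. `m*j + i`). -/
def strideEquiv (N m n : ℕ) (h : N = m * n) : Fin N ≃ Fin N :=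
  (finCongr h).trans <|
    finProdFinEquiv.symm.trans <|
      (Equiv.prodComm (Fin m) (Fin n)).trans <|
        finProdFinEquiv.trans (finCongr (by rw [h]; exact Nat.mul_comm n m))

/-- The `mn`-point stride-`n` permutation matrix `P_n^{mn}`: the `N × N` permutation matrix
(`N = m * n`) determined by `P_n^{mn} · (e_i^m ⊗ e_j^n) = e_j^n ⊗ e_i^m`. -/
def strideMat (K : Type*) [Semiring K] (N m n : ℕ) (h : N = m * n) :
    Matrix (Fin N) (Fin N) K :=
  Matrix.of fun a b => if a = strideEquiv N m n h b then 1 else 0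

/-! On indices the stride-`n` permutation of `ℓmn` points is `v ↦ v / n + ℓm · (v % n)`.
Following it by the stride-`m` permutation gives `v / mn + ℓ · (v % n) + ℓn · ((v / n) % m)`,
and `v % mn = n · ((v / n) % m) + v % n` turns this into `v / mn + ℓ · (v % mn)`, the
stride-`mn` permutation. Permutation matrices turn composition into products. -/

def strideIndex (m n v : ℕ) : ℕ := v / n + m * (v % n)

lemma strideEquiv_val (N m n : ℕ) (h : N = m * n) (b : Fin N) :
    (strideEquiv N m n h b : ℕ) = strideIndex m n b := by
  simp [strideEquiv, strideIndex, finProdFinEquiv, Fin.divNat, Fin.modNat]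

lemma strideIndex_strideIndex (ℓ m n v : ℕ) (hm : 0 < m) :
    strideIndex (ℓ * n) m (strideIndex (ℓ * m) n v) = strideIndex ℓ (m * n) v := by
  have hx : strideIndex (ℓ * m) n v = v / n + m * (ℓ * (v % n)) := by
    rw [strideIndex]; ring
  rw [strideIndex, hx, Nat.add_mul_div_left _ _ hm, Nat.add_mul_mod_self_left, strideIndex,
    Nat.div_div_eq_div_mul, Nat.mul_comm m n, Nat.mod_mul]
  ring

lemma strideEquiv_mul_eq_mul (ℓ m n : ℕ) :
    strideEquiv (ℓ * m * n) ℓ (m * n) (mul_assoc ℓ m n) =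
      strideEquiv (ℓ * m * n) (ℓ * n) m (by ring) *
        strideEquiv (ℓ * m * n) (ℓ * m) n (by ring) := by
  ext b
  have hm : 0 < m := Nat.pos_of_ne_zero fun hm => by subst hm; simpa using b.pos
  simp only [Equiv.Perm.mul_apply, strideEquiv_val, strideIndex_strideIndex ℓ m n _ hm]

lemma strideMat_eq_permMatrix (K : Type*) [Semiring K] (N m n : ℕ) (h : N = m * n) :
    strideMat K N m n h = Equiv.Perm.permMatrix K (strideEquiv N m n h)⁻¹ := by
  rw [← transpose_permMatrix]
  ext a b
  simp [strideMat, PEquiv.toMatrix_apply, eq_comm]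

/-- For all positive integers `ℓ, m, n` and any commutative semiring `K`,
the stride permutation matrices of order `ℓmn` satisfy `P_{mn}^{ℓmn} = P_m^{ℓmn} · P_n^{ℓmn}`. -/
theorem stride_factorization (K : Type*) [CommSemiring K] (ℓ m n : ℕ) :
    strideMat K (ℓ * m * n) ℓ (m * n) (mul_assoc ℓ m n) =
      strideMat K (ℓ * m * n) (ℓ * n) m (by ring) *
        strideMat K (ℓ * m * n) (ℓ * m) n (by ring) := by
  rw [strideMat_eq_permMatrix, strideMat_eq_permMatrix, strideMat_eq_permMatrix,
    ← permMatrix_mul, ← _root_.mul_inv_rev, strideEquiv_mul_eq_mul]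
end

section
/- Let M be an n×n matrix over the real numbers that is orthogonal, i.e., Mᵀ·M = I_n. Then all entries of M are nonnegative if, and only if, M is a permutation matrix (exactly one entry in each row and each column equals 1 and all other entries equal 0). -/
/-!
Since `Mᵀ * M = 1` forces `M * Mᵀ = 1`, both the rows and the columns of `M` are orthonormal.
For nonnegative vectors, orthogonality means disjoint supports, so each column has at most one
nonzero entry; being a nonnegative unit vector, column `j` is then a standard basis vector
`e_{σ j}`. No two columns of an orthogonal matrix are equal, so `σ` is a permutation.
-/

open Matrix

section

variable {n R : Type*} [Fintype n]

theorem mul_eq_zero_of_dotProduct_eq_zero_of_nonneg [Semiring R] [PartialOrder R]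
    [IsOrderedRing R] {u v : n → R} (hu : 0 ≤ u) (hv : 0 ≤ v) (huv : u ⬝ᵥ v = 0) (i : n) :
    u i * v i = 0 :=
  (Finset.sum_eq_zero_iff_of_nonneg fun k _ => mul_nonneg (hu k) (hv k)).mp huv i
    (Finset.mem_univ i)

variable [DecidableEq n] [CommRing R] {M : Matrix n n R}

theorem Matrix.transpose_injective_of_transpose_mul_self_eq_one [Nontrivial R]
    (hM : Mᵀ * M = 1) : Function.Injective Mᵀ := by
  intro j k hjk
  by_contra hne
  have hjk' : (Mᵀ * M) j k = (Mᵀ * M) j j := by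
    change Mᵀ j ⬝ᵥ Mᵀ k = Mᵀ j ⬝ᵥ Mᵀ j
    rw [hjk]
  rw [hM, one_apply_ne hne, one_apply_eq] at hjk'
  exact zero_ne_one hjk'

variable [LinearOrder R] [IsStrictOrderedRing R]

theorem Matrix.eq_zero_or_eq_zero_of_transpose_mul_self_eq_one_of_nonneg
    (hM : Mᵀ * M = 1) (hpos : ∀ i j, 0 ≤ M i j) {i i' : n} (hii' : i ≠ i') (j : n) :
    M i j = 0 ∨ M i' j = 0 := by
  have hrows : M * Mᵀ = 1 := mul_eq_one_comm.mp hM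
  have horth : M i ⬝ᵥ M i' = 0 := by
    have h := congr_fun (congr_fun hrows i) i'
    rwa [mul_apply', one_apply_ne hii'] at h
  exact mul_eq_zero.mp <|
    mul_eq_zero_of_dotProduct_eq_zero_of_nonneg (hpos i) (hpos i') horth j

theorem Matrix.exists_col_eq_single_of_transpose_mul_self_eq_one_of_nonneg
    (hM : Mᵀ * M = 1) (hpos : ∀ i j, 0 ≤ M i j) (j : n) :
    ∃ i, ∀ i', M i' j = if i = i' then 1 else 0 := by
  have hnorm : ∑ i, M i j * M i j = 1 := by
    simpa [mul_apply] using congr_fun (congr_fun hM j) j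
  obtain ⟨i, -, hi⟩ : ∃ i ∈ Finset.univ, M i j * M i j ≠ 0 :=
    Finset.exists_ne_zero_of_sum_ne_zero (hnorm ▸ one_ne_zero)
  have hzero : ∀ i', i ≠ i' → M i' j = 0 := fun i' hii' =>
    (eq_zero_or_eq_zero_of_transpose_mul_self_eq_one_of_nonneg hM hpos hii' j).resolve_left
      (left_ne_zero_of_mul hi)
  have hone : M i j = 1 := by
    rw [Finset.sum_eq_single i (fun i' _ h => by rw [hzero i' (Ne.symm h), mul_zero])
      (fun h => (h (Finset.mem_univ i)).elim), ← sq] at hnorm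
    exact (pow_eq_one_iff_of_nonneg (hpos i j) two_ne_zero).mp hnorm
  refine ⟨i, fun i' => ?_⟩
  split_ifs with h
  · exact h ▸ hone
  · exact hzero i' h

end

/-- Let `M` be an `n × n` real matrix that is orthogonal, i.e.
`Mᵀ · M = Iₙ`. Then all entries of `M` are nonnegative if, and only if, `M` is a
permutation matrix (exactly one entry in each row and column equals `1`, all others `0`). -/
theorem orthogonal_entries_nonneg_iff_permutation (n : ℕ) (M : Matrix (Fin n) (Fin n) ℝ)
    (hM : Mᵀ * M = 1) :
    (∀ i j, 0 ≤ M i j) ↔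
      ∃ σ : Equiv.Perm (Fin n), ∀ i j, M i j = if σ j = i then 1 else 0 := by
  constructor
  · intro hpos
    choose σ hσ using exists_col_eq_single_of_transpose_mul_self_eq_one_of_nonneg hM hpos
    have hσ_inj : Function.Injective σ := fun j k h =>
      transpose_injective_of_transpose_mul_self_eq_one hM <| funext fun i => by
        simp only [transpose_apply, hσ, h]
    exact ⟨Equiv.ofBijective σ hσ_inj.bijective_of_finite, fun i j => hσ j i⟩
  · rintro ⟨σ, hσ⟩ i j
    rw [hσ]
    split_ifs <;> norm_num
end

section
/- Let K be a commutative semiring, let n ≥ 1, and let T = P_2^4 be the 4×4 swap matrix satisfying T·(u⊗w) = w⊗u for all u, w ∈ K². Then the ordered matrix product ∏_{i=1}^{n−1} (I_2^{⊗(n−1−i)} ⊗ T ⊗ I_2^{⊗(i−1)}) (factors multiplied left to right in increasing order of i) equals the stride permutation matrix P_{2^{n−1}}^{2^n}; in particular, applied to any simple tensor v_1 ⊗ v_2 ⊗ ⋯ ⊗ v_n with each v_i ∈ K², it yields v_2 ⊗ ⋯ ⊗ v_n ⊗ v_1. -/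
open Matrix

/-- Kronecker (tensor) product of matrices, with row-major indexing by `Fin`:
the `(n*i + s, q*j + t)` entry of `kron A B` is `A i j * B s t`. -/
def kron {K : Type*} [Mul K] {m n p q : ℕ}
    (A : Matrix (Fin m) (Fin n) K) (B : Matrix (Fin p) (Fin q) K) :
    Matrix (Fin (m * p)) (Fin (n * q)) K :=
  Matrix.reindex finProdFinEquiv finProdFinEquiv (Matrix.kroneckerMap (· * ·) A B)

/-- Cast a matrix along equalities of its dimensions. -/
def mcast {K : Type*} {a b c d : ℕ} (h₁ : a = b) (h₂ : c = d)
    (A : Matrix (Fin a) (Fin c) K) : Matrix (Fin b) (Fin d) K :=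
  Matrix.reindex (finCongr h₁) (finCongr h₂) A

/-- The 4 × 4 swap matrix `T = P_2^4`, with rows `(1,0,0,0), (0,0,1,0), (0,1,0,0), (0,0,0,1)`:
it satisfies `T · (u ⊗ w) = w ⊗ u` for all `u, w ∈ K²`. -/
def swapT (K : Type*) [Semiring K] : Matrix (Fin (2 * 2)) (Fin (2 * 2)) K :=
  strideMat K (2 * 2) 2 2 rfl

/-- The `j`-th factor (`j` zero-based, so `i = j + 1` in one-based numbering)
`I_2^{⊗(n-1-i)} ⊗ T ⊗ I_2^{⊗(i-1)}`, viewed as a `2^n × 2^n` matrix. -/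
def swapFactorA (K : Type*) [Semiring K] (n : ℕ) (j : Fin (n - 1)) :
    Matrix (Fin (2 ^ n)) (Fin (2 ^ n)) K :=
  mcast
    (show 2 ^ (n - 2 - (j : ℕ)) * (2 * 2) * 2 ^ (j : ℕ) = 2 ^ n from by
      have hj : (j : ℕ) < n - 1 := j.isLt
      rw [show (2 * 2 : ℕ) = 2 ^ 2 from rfl, ← pow_add, ← pow_add]
      congr 1
      omega)
    (show 2 ^ (n - 2 - (j : ℕ)) * (2 * 2) * 2 ^ (j : ℕ) = 2 ^ n from by
      have hj : (j : ℕ) < n - 1 := j.isLt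
      rw [show (2 * 2 : ℕ) = 2 ^ 2 from rfl, ← pow_add, ← pow_add]
      congr 1
      omega)
    (kron
      (kron (1 : Matrix (Fin (2 ^ (n - 2 - (j : ℕ)))) (Fin (2 ^ (n - 2 - (j : ℕ)))) K)
        (swapT K))
      (1 : Matrix (Fin (2 ^ (j : ℕ))) (Fin (2 ^ (j : ℕ))) K))

/-- The `j`-th factor (`j` zero-based, so `i = j + 1` in one-based numbering)
`I_2^{⊗(i-1)} ⊗ T ⊗ I_2^{⊗(n-1-i)}`, viewed as a `2^n × 2^n` matrix. -/
def swapFactorB (K : Type*) [Semiring K] (n : ℕ) (j : Fin (n - 1)) :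
    Matrix (Fin (2 ^ n)) (Fin (2 ^ n)) K :=
  mcast
    (show 2 ^ (j : ℕ) * (2 * 2) * 2 ^ (n - 2 - (j : ℕ)) = 2 ^ n from by
      have hj : (j : ℕ) < n - 1 := j.isLt
      rw [show (2 * 2 : ℕ) = 2 ^ 2 from rfl, ← pow_add, ← pow_add]
      congr 1
      omega)
    (show 2 ^ (j : ℕ) * (2 * 2) * 2 ^ (n - 2 - (j : ℕ)) = 2 ^ n from by
      have hj : (j : ℕ) < n - 1 := j.isLt
      rw [show (2 * 2 : ℕ) = 2 ^ 2 from rfl, ← pow_add, ← pow_add]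
      congr 1
      omega)
    (kron
      (kron (1 : Matrix (Fin (2 ^ (j : ℕ))) (Fin (2 ^ (j : ℕ))) K) (swapT K))
      (1 : Matrix (Fin (2 ^ (n - 2 - (j : ℕ)))) (Fin (2 ^ (n - 2 - (j : ℕ)))) K))

/-!
The factors and the stride matrix are permutation matrices, and `σ ↦ (σ⁻¹).permMatrix` is
multiplicative (`Matrix.permMatrixHom`), so the identity reduces to one between permutations of
the binary indices `Fin (2 ^ n)`. The `j`-th factor swaps bits `j` and `j + 1` of an index, while
the stride permutation moves the top bit `n - 1` to position `0` and shifts the other bits up.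
The ordered product applies the swap of the highest pair first, so by induction the first `k`
factors move bit `k` down to position `0` in this way.
-/

open Equiv

theorem val_strideEquiv (N m n : ℕ) (h : N = m * n) (b : Fin N) :
    (strideEquiv N m n h b : ℕ) = b / n + m * (b % n) :=
  rfl

section PermMatrix

variable {R : Type*} [Semiring R]

theorem strideMat_eq_permMatrixHom (N m n : ℕ) (h : N = m * n) :
    strideMat R N m n h = permMatrixHom (strideEquiv N m n h) := by
  ext a b
  simp [strideMat, Perm.inv_def, eq_symm_apply, eq_comm]

variable {α β : Type*} [Fintype α] [DecidableEq α] [Fintype β] [DecidableEq β]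

theorem kroneckerMap_mul_permMatrixHom (σ : Perm α) (τ : Perm β) :
    kroneckerMap (· * ·) (permMatrixHom σ : Matrix α α R) (permMatrixHom τ) =
      permMatrixHom (σ.prodCongr τ) := by
  ext ⟨a, b⟩ ⟨c, d⟩
  simp [Perm.inv_def, ← ite_and, Prod.ext_iff, and_comm]

theorem reindex_permMatrixHom (e : α ≃ β) (σ : Perm α) :
    reindex e e (permMatrixHom σ : Matrix α α R) = permMatrixHom (e.permCongr σ) := by
  ext a b
  simp [Perm.inv_def, permCongr_def, eq_symm_apply]

theorem kron_permMatrixHom {m p : ℕ} (σ : Perm (Fin m)) (τ : Perm (Fin p)) :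
    kron (permMatrixHom σ : Matrix _ _ R) (permMatrixHom τ) =
      permMatrixHom (finProdFinEquiv.permCongr (σ.prodCongr τ)) :=
  (congrArg _ (kroneckerMap_mul_permMatrixHom σ τ)).trans (reindex_permMatrixHom _ _)

theorem mcast_permMatrixHom {a b : ℕ} (h : a = b) (σ : Perm (Fin a)) :
    mcast h h (permMatrixHom σ : Matrix _ _ R) = permMatrixHom ((finCongr h).permCongr σ) :=
  reindex_permMatrixHom _ _

end PermMatrix

theorem swapFactor_card {n : ℕ} (j : Fin (n - 1)) :
    2 ^ (n - 2 - (j : ℕ)) * (2 * 2) * 2 ^ (j : ℕ) = 2 ^ n := by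
  rw [show (2 * 2 : ℕ) = 2 ^ 2 from rfl, ← pow_add, ← pow_add]
  congr 1
  omega

def swapFactorPerm (n : ℕ) (j : Fin (n - 1)) : Perm (Fin (2 ^ n)) :=
  (finCongr (swapFactor_card j)).permCongr <| finProdFinEquiv.permCongr <|
    (finProdFinEquiv.permCongr ((1 : Perm (Fin (2 ^ (n - 2 - (j : ℕ))))).prodCongr
      (strideEquiv (2 * 2) 2 2 rfl))).prodCongr (1 : Perm (Fin (2 ^ (j : ℕ))))

theorem swapFactorA_eq_permMatrixHom (K : Type*) [Semiring K] (n : ℕ) (j : Fin (n - 1)) :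
    swapFactorA K n j = permMatrixHom (swapFactorPerm n j) := by
  rw [swapFactorA, swapT, strideMat_eq_permMatrixHom,
    ← map_one (permMatrixHom : Perm (Fin (2 ^ (n - 2 - (j : ℕ)))) →* _),
    ← map_one (permMatrixHom : Perm (Fin (2 ^ (j : ℕ))) →* _),
    kron_permMatrixHom, kron_permMatrixHom, mcast_permMatrixHom]
  rfl

/- With `q = 2 ^ k`, `swapBitsAt q` exchanges bits `k` and `k + 1`, and `rotateBitsAt q` moves
bit `k` to position `0`, shifting bits `0, …, k - 1` up by one. -/

def swapLowBits (x : ℕ) : ℕ := 4 * (x / 4) + 2 * (x % 2) + x / 2 % 2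

def swapBitsAt (q b : ℕ) : ℕ := q * swapLowBits (b / q) + b % q

def rotateBitsAt (q b : ℕ) : ℕ := 2 * q * (b / q / 2) + 2 * (b % q) + b / q % 2

theorem swapFactorPerm_val (n : ℕ) (j : Fin (n - 1)) (b : Fin (2 ^ n)) :
    (swapFactorPerm n j b : ℕ) = swapBitsAt (2 ^ (j : ℕ)) b := by
  simp only [swapFactorPerm, val_strideEquiv, permCongr_apply, finCongr_apply, Fin.val_cast,
    finProdFinEquiv_apply_val, finProdFinEquiv_symm_apply, prodCongr_apply, Prod.map, Perm.coe_one,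
    id, finCongr_symm, Fin.coe_divNat, Fin.coe_modNat, swapBitsAt, swapLowBits]
  generalize (b : ℕ) / 2 ^ (j : ℕ) = x
  rw [add_comm]
  congr 2
  omega

theorem rotateBitsAt_one (b : ℕ) : rotateBitsAt 1 b = b := by
  simp only [rotateBitsAt, Nat.div_one, Nat.mod_one]
  omega

theorem rotateBitsAt_of_lt {q b : ℕ} (hb : b < 2 * q) :
    rotateBitsAt q b = b / q + 2 * (b % q) := by
  have hq : b / q < 2 := Nat.div_lt_of_lt_mul (by rwa [mul_comm] at hb)
  simp only [rotateBitsAt, Nat.div_eq_of_lt hq, Nat.mod_eq_of_lt hq]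
  ring

theorem rotateBitsAt_swapBitsAt {q : ℕ} (hq : 0 < q) (b : ℕ) :
    rotateBitsAt q (swapBitsAt q b) = rotateBitsAt (2 * q) b := by
  have hz : b % q < q := Nat.mod_lt b hq
  have hdiv : swapBitsAt q b / q = swapLowBits (b / q) := by
    rw [swapBitsAt, Nat.mul_add_div hq, Nat.div_eq_of_lt hz, add_zero]
  have hmod : swapBitsAt q b % q = b % q := by
    rw [swapBitsAt, Nat.mul_add_mod, Nat.mod_eq_of_lt hz]
  have hdiv2 : b / (2 * q) = b / q / 2 := by rw [mul_comm, Nat.div_div_eq_div_mul]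
  have hmod2 : b % (2 * q) = b % q + q * (b / q % 2) := by rw [mul_comm, Nat.mod_mul]
  rw [rotateBitsAt, rotateBitsAt, hdiv, hmod, hdiv2, hmod2]
  generalize b / q = x
  have h1 : 2 * (swapLowBits x / 2) = 4 * (x / 2 / 2) + 2 * (x % 2) := by
    simp only [swapLowBits]; omega
  have h2 : swapLowBits x % 2 = x / 2 % 2 := by
    simp only [swapLowBits]; omega
  calc 2 * q * (swapLowBits x / 2) + 2 * (b % q) + swapLowBits x % 2
      = q * (2 * (swapLowBits x / 2)) + 2 * (b % q) + swapLowBits x % 2 := by ring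
    _ = _ := by rw [h1, h2]; ring

theorem ofFn_prod_val_eq_rotateBitsAt {N m : ℕ} (g : Fin m → Perm (Fin N))
    (hg : ∀ j x, (g j x : ℕ) = swapBitsAt (2 ^ (j : ℕ)) x) (x : Fin N) :
    ((List.ofFn g).prod x : ℕ) = rotateBitsAt (2 ^ m) x := by
  induction m generalizing x with
  | zero => simp [rotateBitsAt_one]
  | succ m ih =>
    rw [List.ofFn_succ', List.prod_concat, Perm.mul_apply, ih _ (fun j => hg j.castSucc), hg,
      Fin.val_last, rotateBitsAt_swapBitsAt (by positivity), pow_succ']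

/-- For a commutative semiring `K` and `n ≥ 1`, the ordered product
`∏_{i=1}^{n-1} (I_2^{⊗(n-1-i)} ⊗ T ⊗ I_2^{⊗(i-1)})` (factors multiplied left to right in
increasing order of `i`) equals the stride permutation matrix `P_{2^{n-1}}^{2^n}`. -/
theorem swap_product_eq_stride_pow (K : Type*) [CommSemiring K] (n : ℕ) (hn : 1 ≤ n) :
    ((List.finRange (n - 1)).map (swapFactorA K n)).prod =
      strideMat K (2 ^ n) 2 (2 ^ (n - 1))
        (by
          have h : n - 1 + 1 = n := Nat.sub_add_cancel hn
          calc (2 : ℕ) ^ n = 2 ^ (n - 1 + 1) := by rw [h]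
            _ = 2 * 2 ^ (n - 1) := by rw [pow_succ]; ring) := by
  have hfactor : swapFactorA K n = permMatrixHom ∘ swapFactorPerm n :=
    funext (swapFactorA_eq_permMatrixHom K n)
  rw [hfactor, ← List.map_map, ← map_list_prod, ← List.ofFn_eq_map,
    strideMat_eq_permMatrixHom]
  congr 1
  ext b
  have hb : (b : ℕ) < 2 * 2 ^ (n - 1) := by
    rw [← pow_succ', Nat.sub_add_cancel hn]
    exact b.isLt
  rw [ofFn_prod_val_eq_rotateBitsAt _ (swapFactorPerm_val n), rotateBitsAt_of_lt hb,
    val_strideEquiv]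
end

section
/- Let K be a commutative semiring, let A be an m×m matrix and B an n×n matrix over K, and let μ ≥ m and ν ≥ n. Let Ā = π_μ(A) and B̄ = π_ν(B) be the padded matrices (block-diagonal with identity padding). Then there exist permutation matrices Q and Q' of order μν and a square matrix H of order μν − mn such that Q · (Ā ⊗ B̄) · Q' equals the block-diagonal matrix [[A⊗B, 0], [0, H]]; moreover, over a commutative ring, if A and B are orthogonal then H is orthogonal. -/
open Matrix

/-- Padding of an `n × n` matrix to an `N × N` matrix: block-diagonal form
`[[A, 0], [0, I_{N-n}]]`, with `A` in the top-left `n × n` block, the identity in the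
bottom-right block, and zeros elsewhere. -/
def padM (K : Type*) [Semiring K] (N : ℕ) {n : ℕ} (A : Matrix (Fin n) (Fin n) K) :
    Matrix (Fin N) (Fin N) K :=
  Matrix.of fun i j =>
    if hi : (i : ℕ) < n then
      if hj : (j : ℕ) < n then A ⟨i, hi⟩ ⟨j, hj⟩ else 0
    else
      if (i : ℕ) = (j : ℕ) then 1 else 0

/-- The `N × N` block-diagonal matrix `[[X, 0], [0, H]]` with top-left block `X` of
order `a` and bottom-right block `H` of order `N - a`. -/
def blockDiag2 (K : Type*) [Semiring K] (N : ℕ) {a : ℕ} (X : Matrix (Fin a) (Fin a) K)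
    (H : Matrix (Fin (N - a)) (Fin (N - a)) K) : Matrix (Fin N) (Fin N) K :=
  Matrix.of fun i j =>
    if hi : (i : ℕ) < a then
      (if hj : (j : ℕ) < a then X ⟨i, hi⟩ ⟨j, hj⟩ else 0)
    else if (j : ℕ) < a then 0
    else H ⟨(i : ℕ) - a, by have := i.isLt; omega⟩ ⟨(j : ℕ) - a, by have := j.isLt; omega⟩

/-- The permutation matrix of a permutation `σ`: its column `j` is the standard basis
vector `e_{σ j}` (exactly one `1` in each row and in each column, zeros elsewhere). -/
def permMat (K : Type*) [Semiring K] {N : ℕ} (σ : Equiv.Perm (Fin N)) :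
    Matrix (Fin N) (Fin N) K :=
  Matrix.of fun i j => if σ j = i then 1 else 0

/-! Index the rows and columns of `π_μ(A) ⊗ π_ν(B)` by pairs in `Fin μ × Fin ν`. An entry
vanishes unless its row and its column both lie in the corner `{(i, j) | i < m, j < n}` or
both lie outside it, and on the corner the entries are those of `A ⊗ B`. Listing the corner
first, by the same permutation of rows and columns, therefore gives `[[A ⊗ B, 0], [0, H]]`.
A simultaneous permutation of rows and columns preserves orthogonality, and the diagonal
blocks of an orthogonal block-diagonal matrix are orthogonal. -/

def finEquivSumSub {a N : ℕ} (h : a ≤ N) : Fin N ≃ Fin a ⊕ Fin (N - a) :=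
  (finCongr (by omega : N = a + (N - a))).trans finSumFinEquiv.symm

section BlockDiag

variable {K : Type*} [Semiring K] {N a : ℕ}

lemma blockDiag2_eq_submatrix_fromBlocks (h : a ≤ N) (X : Matrix (Fin a) (Fin a) K)
    (H : Matrix (Fin (N - a)) (Fin (N - a)) K) :
    blockDiag2 K N X H = (fromBlocks X 0 0 H).submatrix (finEquivSumSub h) (finEquivSumSub h) := by
  ext i j
  obtain ⟨s, rfl⟩ := (finEquivSumSub h).symm.surjective i
  obtain ⟨t, rfl⟩ := (finEquivSumSub h).symm.surjective j
  rcases s with s | s <;> rcases t with t | t <;>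
    simp [blockDiag2, finEquivSumSub]

lemma padM_eq_blockDiag2_one (A : Matrix (Fin a) (Fin a) K) :
    padM K N A = blockDiag2 K N A 1 := by
  ext i j
  simp only [padM, blockDiag2, of_apply, one_apply, Fin.ext_iff]
  split_ifs <;> first | rfl | omega

lemma blockDiag2_transpose_mul_self (h : a ≤ N) (X : Matrix (Fin a) (Fin a) K)
    (H : Matrix (Fin (N - a)) (Fin (N - a)) K) :
    (blockDiag2 K N X H)ᵀ * blockDiag2 K N X H = blockDiag2 K N (Xᵀ * X) (Hᵀ * H) := by
  simp only [blockDiag2_eq_submatrix_fromBlocks h, transpose_submatrix, submatrix_mul_equiv,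
    fromBlocks_transpose, fromBlocks_multiply, transpose_zero, Matrix.zero_mul, Matrix.mul_zero,
    add_zero, zero_add]

lemma blockDiag2_one_one (h : a ≤ N) : blockDiag2 K N (1 : Matrix (Fin a) (Fin a) K) 1 = 1 := by
  rw [blockDiag2_eq_submatrix_fromBlocks h, fromBlocks_one, submatrix_one_equiv]

lemma blockDiag2_inj (h : a ≤ N) {X X' : Matrix (Fin a) (Fin a) K}
    {H H' : Matrix (Fin (N - a)) (Fin (N - a)) K} :
    blockDiag2 K N X H = blockDiag2 K N X' H' ↔ X = X' ∧ H = H' := by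
  refine ⟨fun hXH => ?_, fun ⟨hX, hH⟩ => hX ▸ hH ▸ rfl⟩
  simp only [blockDiag2_eq_submatrix_fromBlocks h] at hXH
  have hblocks := (reindex (finEquivSumSub h).symm (finEquivSumSub h).symm).injective
    (by simpa only [reindex_apply, Equiv.symm_symm] using hXH)
  obtain ⟨hX, -, -, hH⟩ := fromBlocks_inj.mp hblocks
  exact ⟨hX, hH⟩

lemma transpose_mul_self_eq_one_of_blockDiag2 (h : a ≤ N)
    {X : Matrix (Fin a) (Fin a) K} {H : Matrix (Fin (N - a)) (Fin (N - a)) K}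
    (hXH : (blockDiag2 K N X H)ᵀ * blockDiag2 K N X H = 1) : Hᵀ * H = 1 := by
  rw [blockDiag2_transpose_mul_self h, ← blockDiag2_one_one h, blockDiag2_inj h] at hXH
  exact hXH.2

lemma transpose_mul_self_padM (h : a ≤ N)
    {A : Matrix (Fin a) (Fin a) K} (hA : Aᵀ * A = 1) : (padM K N A)ᵀ * padM K N A = 1 := by
  rw [padM_eq_blockDiag2_one, blockDiag2_transpose_mul_self h, hA, transpose_one, Matrix.one_mul,
    blockDiag2_one_one h]

end BlockDiag

lemma permMat_eq_toMatrix {K : Type*} [Semiring K] {N : ℕ} (σ : Equiv.Perm (Fin N)) :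
    permMat K σ = σ.symm.toPEquiv.toMatrix := by
  ext i j
  simp only [permMat, of_apply, PEquiv.toMatrix_apply, Equiv.toPEquiv_apply, Option.mem_some_iff,
    Equiv.symm_apply_eq]
  exact if_congr eq_comm rfl rfl

lemma permMat_mul_mul_permMat {K : Type*} [Semiring K] {N : ℕ} (σ τ : Equiv.Perm (Fin N))
    (M : Matrix (Fin N) (Fin N) K) :
    permMat K σ * M * permMat K τ = M.submatrix σ.symm τ := by
  rw [permMat_eq_toMatrix, permMat_eq_toMatrix, PEquiv.toMatrix_toPEquiv_mul,
    PEquiv.mul_toMatrix_toPEquiv, submatrix_submatrix, Equiv.symm_symm]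
  rfl

lemma kron_eq_submatrix_kroneckerMap {K : Type*} [Mul K] {m n p q : ℕ}
    (A : Matrix (Fin m) (Fin n) K) (B : Matrix (Fin p) (Fin q) K) :
    kron A B = (kroneckerMap (· * ·) A B).submatrix finProdFinEquiv.symm finProdFinEquiv.symm :=
  rfl

lemma kron_submatrix_trans_finProdFinEquiv {K ι κ : Type*} [Mul K] {m n p q : ℕ}
    (X : Matrix (Fin m) (Fin n) K) (Y : Matrix (Fin p) (Fin q) K) (e : ι ≃ Fin m × Fin p)
    (f : κ ≃ Fin n × Fin q) :
    (kron X Y).submatrix (e.trans finProdFinEquiv) (f.trans finProdFinEquiv) =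
      (kroneckerMap (· * ·) X Y).submatrix e f := by
  simp only [kron_eq_submatrix_kroneckerMap, submatrix_submatrix, Equiv.coe_trans,
    ← Function.comp_assoc, Equiv.symm_comp_self, Function.id_comp]

lemma kron_transpose_mul_self {K : Type*} [CommSemiring K] {p q : ℕ}
    (X : Matrix (Fin p) (Fin p) K) (Y : Matrix (Fin q) (Fin q) K) :
    (kron X Y)ᵀ * kron X Y = kron (Xᵀ * X) (Yᵀ * Y) := by
  rw [kron_eq_submatrix_kroneckerMap, kron_eq_submatrix_kroneckerMap, transpose_submatrix,
    submatrix_mul_equiv, ← kroneckerMap_transpose, ← mul_kronecker_mul]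

lemma kron_one_one {K : Type*} [MulZeroOneClass K] {p q : ℕ} :
    kron (1 : Matrix (Fin p) (Fin p) K) (1 : Matrix (Fin q) (Fin q) K) = 1 := by
  rw [kron_eq_submatrix_kroneckerMap, one_kronecker_one, submatrix_one_equiv]

lemma fromBlocks_submatrix_sumCongr {α l m n o l' m' n' o' : Type*}
    (A : Matrix n l α) (B : Matrix n m α) (C : Matrix o l α) (D : Matrix o m α)
    (f : n' ≃ n) (g : o' ≃ o) (h : l' ≃ l) (k : m' ≃ m) :
    (fromBlocks A B C D).submatrix (f.sumCongr g) (h.sumCongr k) =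
      fromBlocks (A.submatrix f h) (B.submatrix f k) (C.submatrix g h) (D.submatrix g k) := by
  ext (i | i) (j | j) <;> rfl

lemma submatrix_sumCompl_eq_fromBlocks {ι α : Type*} [Zero α] (M : Matrix ι ι α) (p : ι → Prop)
    [DecidablePred p] (hM : ∀ x y, ¬(p x ↔ p y) → M x y = 0) :
    M.submatrix (Equiv.sumCompl p) (Equiv.sumCompl p) =
      fromBlocks (M.toBlock p p) 0 0 (M.toBlock (¬p ·) (¬p ·)) := by
  ext (x | x) (y | y)
  · rfl
  · exact hM _ _ (by simp [x.2, y.2])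
  · exact hM _ _ (by simp [x.2, y.2])
  · rfl

section Corner

variable {K : Type*} [Semiring K] {m n μ ν : ℕ}

abbrev InCorner (m n : ℕ) (x : Fin μ × Fin ν) : Prop :=
  (x.1 : ℕ) < m ∧ (x.2 : ℕ) < n

lemma padM_apply_castLE {N : ℕ} (h : n ≤ N) (A : Matrix (Fin n) (Fin n) K) (i j : Fin n) :
    padM K N A (Fin.castLE h i) (Fin.castLE h j) = A i j := by
  simp [padM]

lemma padM_apply_eq_zero {N : ℕ} (A : Matrix (Fin n) (Fin n) K) {i j : Fin N}
    (hij : ¬((i : ℕ) < n ↔ (j : ℕ) < n)) : padM K N A i j = 0 := by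
  simp only [padM, of_apply]
  split_ifs <;> first | rfl | omega

lemma kroneckerMap_padM_apply_eq_zero (A : Matrix (Fin m) (Fin m) K)
    (B : Matrix (Fin n) (Fin n) K) {x y : Fin μ × Fin ν}
    (hxy : ¬(InCorner m n x ↔ InCorner m n y)) :
    kroneckerMap (· * ·) (padM K μ A) (padM K ν B) x y = 0 := by
  rw [kroneckerMap_apply]
  by_cases h₁ : (x.1 : ℕ) < m ↔ (y.1 : ℕ) < m
  · have h₂ : ¬((x.2 : ℕ) < n ↔ (y.2 : ℕ) < n) := by tauto
    rw [padM_apply_eq_zero B h₂, mul_zero]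
  · rw [padM_apply_eq_zero A h₁, zero_mul]

def cornerEquiv (hm : m ≤ μ) (hn : n ≤ ν) :
    Fin m × Fin n ≃ {x : Fin μ × Fin ν // InCorner m n x} :=
  ((Fin.castLEquiv hm).prodCongr (Fin.castLEquiv hn)).trans Equiv.subtypeProdEquivProd.symm

lemma toBlock_kroneckerMap_padM_submatrix_cornerEquiv (hm : m ≤ μ) (hn : n ≤ ν)
    (A : Matrix (Fin m) (Fin m) K) (B : Matrix (Fin n) (Fin n) K) :
    ((kroneckerMap (· * ·) (padM K μ A) (padM K ν B)).toBlock (InCorner m n) (InCorner m n)).submatrix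
      (cornerEquiv hm hn) (cornerEquiv hm hn) = kroneckerMap (· * ·) A B := by
  ext ⟨i, k⟩ ⟨j, l⟩
  exact congrArg₂ (· * ·) (padM_apply_castLE hm A i j) (padM_apply_castLE hn B k l)

noncomputable def cornerComplEquiv (hm : m ≤ μ) (hn : n ≤ ν) :
    Fin (μ * ν - m * n) ≃ {x : Fin μ × Fin ν // ¬InCorner m n x} :=
  Fintype.equivOfCardEq <| by
    rw [Fintype.card_subtype_compl, ← Fintype.card_congr (cornerEquiv hm hn)]
    simp

noncomputable def paddedKronEquiv (hm : m ≤ μ) (hn : n ≤ ν) : Fin (μ * ν) ≃ Fin μ × Fin ν :=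
  (finEquivSumSub (Nat.mul_le_mul hm hn)).trans <|
    ((finProdFinEquiv.symm.trans (cornerEquiv hm hn)).sumCongr (cornerComplEquiv hm hn)).trans
      (Equiv.sumCompl _)

end Corner

theorem exists_submatrix_kron_padM_eq_blockDiag2 {K : Type*} [Semiring K] {m n μ ν : ℕ}
    (hm : m ≤ μ) (hn : n ≤ ν) (A : Matrix (Fin m) (Fin m) K) (B : Matrix (Fin n) (Fin n) K) :
    ∃ (e : Fin (μ * ν) ≃ Fin (μ * ν)) (H : Matrix (Fin (μ * ν - m * n)) (Fin (μ * ν - m * n)) K),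
      (kron (padM K μ A) (padM K ν B)).submatrix e e = blockDiag2 K (μ * ν) (kron A B) H := by
  refine ⟨(paddedKronEquiv hm hn).trans finProdFinEquiv,
    ((kroneckerMap (· * ·) (padM K μ A) (padM K ν B)).toBlock _ _).submatrix
      (cornerComplEquiv hm hn) (cornerComplEquiv hm hn), ?_⟩
  have hblocks := submatrix_sumCompl_eq_fromBlocks _ (InCorner m n)
    fun _ _ => kroneckerMap_padM_apply_eq_zero (μ := μ) (ν := ν) A B
  rw [blockDiag2_eq_submatrix_fromBlocks (Nat.mul_le_mul hm hn),
    kron_submatrix_trans_finProdFinEquiv, paddedKronEquiv, Equiv.coe_trans, Equiv.coe_trans,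
    ← submatrix_submatrix,
    ← submatrix_submatrix, hblocks, fromBlocks_submatrix_sumCongr, Equiv.coe_trans,
    ← submatrix_submatrix, toBlock_kroneckerMap_padM_submatrix_cornerEquiv,
    ← kron_eq_submatrix_kroneckerMap]
  rfl

/-- For matrices `A` (order `m`) and `B` (order `n`) over a commutative
semiring, and `μ ≥ m`, `ν ≥ n`, there are permutation matrices `Q, Q'` of order `μν` and a
square matrix `H` of order `μν - mn` with `Q · (π_μ(A) ⊗ π_ν(B)) · Q' = [[A ⊗ B, 0], [0, H]]`;
moreover, over a commutative ring, if `A` and `B` are orthogonal then `H` is orthogonal. -/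
theorem kron_padded_perm_block (K : Type*) [CommSemiring K] (m n μ ν : ℕ)
    (hm : m ≤ μ) (hn : n ≤ ν) :
    (∀ (A : Matrix (Fin m) (Fin m) K) (B : Matrix (Fin n) (Fin n) K),
      ∃ (σ σ' : Equiv.Perm (Fin (μ * ν)))
        (H : Matrix (Fin (μ * ν - m * n)) (Fin (μ * ν - m * n)) K),
        permMat K σ * kron (padM K μ A) (padM K ν B) * permMat K σ' =
          blockDiag2 K (μ * ν) (kron A B) H) ∧
    (∀ (R : Type) [CommRing R] (A : Matrix (Fin m) (Fin m) R) (B : Matrix (Fin n) (Fin n) R),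
      Aᵀ * A = 1 → Bᵀ * B = 1 →
      ∃ (σ σ' : Equiv.Perm (Fin (μ * ν)))
        (H : Matrix (Fin (μ * ν - m * n)) (Fin (μ * ν - m * n)) R),
        permMat R σ * kron (padM R μ A) (padM R ν B) * permMat R σ' =
          blockDiag2 R (μ * ν) (kron A B) H ∧
        Hᵀ * H = 1) := by
  refine ⟨fun A B => ?_, fun R _ A B hA hB => ?_⟩
  · obtain ⟨e, H, hblock⟩ := exists_submatrix_kron_padM_eq_blockDiag2 hm hn A B
    exact ⟨e.symm, e, H, by rwa [permMat_mul_mul_permMat, Equiv.symm_symm]⟩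
  · obtain ⟨e, H, hblock⟩ := exists_submatrix_kron_padM_eq_blockDiag2 hm hn A B
    refine ⟨e.symm, e, H, by rwa [permMat_mul_mul_permMat, Equiv.symm_symm], ?_⟩
    refine transpose_mul_self_eq_one_of_blockDiag2 (Nat.mul_le_mul hm hn) (X := kron A B) ?_
    rw [← hblock, transpose_submatrix, submatrix_mul_equiv, kron_transpose_mul_self,
      transpose_mul_self_padM hm hA, transpose_mul_self_padM hn hB, kron_one_one,
      submatrix_one_equiv]
end
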